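/- arXiv:1010.3162 — 3 statements merged into one kernel-verified Lean document; each statement's English description precedes it below -/
import Mathlib

section
/- If a collection C of subsets of a set X contains, for some k ≥ 1, a subcollection C₀ of 2^k sets whose join is full, i.e., the join of the 2^k sets, formed by intersecting each set or its complement, has all 2^(2^k) cells nonempty, then the VC dimension of C is at least k. -/
/-- A family of sets `C` shatters a finite set `D` if every subset of `D`
is the trace of some member of `C` on `D`. -/
def Shatters {X : Type*} (C : Set (Set X)) (D : Finset X) : Prop :=
  ∀ S ⊆ (D : Set X), ∃ c ∈ C, c ∩ (D : Set X) = S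

/-- If a collection `C` of subsets of `X` contains a subcollection of `2^k` sets
whose join is full (every choice of each set or its complement has nonempty
intersection), then the VC dimension of `C` is at least `k`, i.e. `C`
shatters some `k`-element set. -/
theorem vc_dim_ge_of_full_join {X : Type*} (C : Set (Set X)) (k : ℕ) (hk : 1 ≤ k)
    (A : Fin (2 ^ k) → Set X) (hA : Function.Injective A) (hAC : ∀ i, A i ∈ C)
    (hfull : ∀ ε : Fin (2 ^ k) → Bool,
      (⋂ i, if ε i then A i else (A i)ᶜ).Nonempty) :
    ∃ D : Finset X, D.card = k ∧ Shatters C D := by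
  classical
  have hcard : Fintype.card (Fin k → Bool) = 2 ^ k := by simp
  let e : (Fin k → Bool) ≃ Fin (2 ^ k) := Fintype.equivFinOfCardEq hcard
  have hne := fun j : Fin k => hfull (fun i => e.symm i j)
  choose x hx using hne
  have hmem : ∀ j i, x j ∈ A i ↔ e.symm i j = true := by
    intro j i
    have h := Set.mem_iInter.mp (hx j) i
    rcases Bool.eq_false_or_eq_true (e.symm i j) with hb | hb
    · simp [hb] at h ⊢
      exact h
    · simpa [hb] using h
  have hxinj : Function.Injective x := by
    intro j j' hjj'
    by_contra hne'
    set f : Fin k → Bool := fun l => decide (l = j) with hf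
    have h1 : x j ∈ A (e f) := (hmem j (e f)).mpr (by simp [hf, e.symm_apply_apply])
    have h2 : ¬ x j' ∈ A (e f) := by
      rw [hmem]
      simp [hf, e.symm_apply_apply]
      exact fun h => hne' h.symm
    exact h2 (hjj' ▸ h1)
  refine ⟨Finset.univ.image x, by
    rw [Finset.card_image_of_injective _ hxinj]; simp, ?_⟩
  intro S hS
  set f : Fin k → Bool := fun j => decide (x j ∈ S) with hf
  refine ⟨A (e f), hAC _, ?_⟩
  ext y
  simp only [Set.mem_inter_iff, Finset.coe_image, Set.mem_image, Finset.coe_univ,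
    Set.mem_univ, true_and]
  constructor
  · rintro ⟨hyA, ⟨j, rfl⟩⟩
    have := (hmem j (e f)).mp hyA
    simpa [hf, e.symm_apply_apply] using this
  · intro hyS
    have hyD := hS hyS
    simp only [Finset.coe_image, Set.mem_image, Finset.coe_univ, Set.mem_univ,
      true_and] at hyD
    obtain ⟨j, rfl⟩ := hyD
    exact ⟨(hmem j (e f)).mpr (by simp [hf, e.symm_apply_apply, hyS]), ⟨j, rfl⟩⟩
end

section
/- Let T be an irrational rotation of the unit circle with uniform measure μ, and for each x let C_x = {T^i x : i ∈ ℤ} be the orbit of x. Then the family C = {C_x : x} has VC dimension 1, each C_x has μ-measure 0, and for the stationary ergodic process X_i = T^i X₀ with X₀ ∼ μ, sup_{C∈C} |m^{-1}∑_{i=1}^m 1{X_i ∈ C} − μ(C)| = 1 almost surely for every m ≥ 1; hence the uniform law of large numbers fails for this uncountable VC class. -/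
open MeasureTheory Filter

/-- The orbit of a point `x` of the unit circle under rotation by `α`. -/
def rotOrbit (α : ℝ) (x : UnitAddCircle) : Set UnitAddCircle :=
  {y | ∃ i : ℤ, y = x + i • (α : UnitAddCircle)}

section Shatters

variable {X : Type*} {C : Set (Set X)}

theorem shatters_singleton {x : X} (hmem : ∃ c ∈ C, x ∈ c) (hnotMem : ∃ c ∈ C, x ∉ c) :
    Shatters C {x} := by
  intro S hS
  rw [Finset.coe_singleton] at hS ⊢
  rcases Set.subset_singleton_iff_eq.mp hS with rfl | rfl
  · obtain ⟨c, hc, hx⟩ := hnotMem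
    exact ⟨c, hc, Set.inter_singleton_eq_empty.mpr hx⟩
  · obtain ⟨c, hc, hx⟩ := hmem
    exact ⟨c, hc, Set.inter_singleton_of_mem hx⟩

theorem Shatters.card_le_one (hC : ∀ c ∈ C, ∀ c' ∈ C, ∀ x ∈ c, x ∈ c' → c = c')
    {D : Finset X} (hD : Shatters C D) : D.card ≤ 1 := by
  by_contra! hcard
  obtain ⟨a, ha, b, hb, hab⟩ := Finset.one_lt_card.mp hcard
  obtain ⟨c, hc, hca⟩ := hD {a} (by simpa using ha)
  obtain ⟨c', hc', hcab⟩ := hD {a, b} (Set.insert_subset ha (by simpa using hb))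
  have ha_c : a ∈ c := (hca.ge (Set.mem_singleton a)).1
  have ha_c' : a ∈ c' := (hcab.ge (Set.mem_insert a {b})).1
  have hb_c' : b ∈ c' := (hcab.ge (Set.mem_insert_of_mem a rfl)).1
  have hb_a : b ∈ ({a} : Set X) := hca.le ⟨hC c hc c' hc' a ha_c ha_c' ▸ hb_c', hb⟩
  exact hab hb_a.symm

end Shatters

instance UnitAddCircle.nullSingletonClass_volume :
    NullSingletonClass (volume : Measure UnitAddCircle) where
  measure_singleton x := by
    simpa [Metric.closedBall_zero] using AddCircle.volume_closedBall (T := 1) (x := x) 0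

theorem rotOrbit_eq_of_mem {α : ℝ} {x y : UnitAddCircle} (h : y ∈ rotOrbit α x) :
    rotOrbit α y = rotOrbit α x := by
  obtain ⟨i, rfl⟩ := h
  ext z
  constructor
  · rintro ⟨j, rfl⟩
    exact ⟨i + j, by rw [add_zsmul]; abel⟩
  · rintro ⟨j, rfl⟩
    exact ⟨j - i, by rw [sub_zsmul]; abel⟩

section rotOrbit

variable (α : ℝ) (x : UnitAddCircle)

theorem mem_rotOrbit_self : x ∈ rotOrbit α x :=
  ⟨0, by simp⟩

theorem rotOrbit_countable : (rotOrbit α x).Countable := by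
  have hrange : rotOrbit α x = Set.range (fun i : ℤ => x + i • (α : UnitAddCircle)) := by
    ext z
    simp [rotOrbit, eq_comm]
  exact hrange ▸ Set.countable_range _

theorem volume_rotOrbit : volume (rotOrbit α x) = 0 :=
  (rotOrbit_countable α x).measure_zero _

theorem exists_notMem_rotOrbit : ∃ y, y ∉ rotOrbit α x := by
  by_contra! h
  have huniv : rotOrbit α x = Set.univ := Set.eq_univ_of_forall h
  simpa [huniv] using volume_rotOrbit α x

end rotOrbit

section EmpiricalFrequency

variable {β : Type*} (s : Set β) (y : ℕ → β)

theorem abs_sum_indicator_one_div_le_one (m : ℕ) :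
    |(∑ i ∈ Finset.range m, s.indicator (fun _ => (1 : ℝ)) (y i)) / m| ≤ 1 := by
  have hle : ∑ i ∈ Finset.range m, s.indicator (fun _ => (1 : ℝ)) (y i) ≤ m := by
    calc ∑ i ∈ Finset.range m, s.indicator (fun _ => (1 : ℝ)) (y i)
        ≤ ∑ _i ∈ Finset.range m, (1 : ℝ) :=
          Finset.sum_le_sum fun i _ => Set.indicator_le_self' (fun _ _ => zero_le_one) _
      _ = m := by simp
  have hnonneg : 0 ≤ ∑ i ∈ Finset.range m, s.indicator (fun _ => (1 : ℝ)) (y i) :=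
    Finset.sum_nonneg fun i _ => Set.indicator_nonneg (fun _ _ => zero_le_one) _
  rw [abs_of_nonneg (by positivity)]
  exact div_le_one_of_le₀ hle m.cast_nonneg

theorem sum_indicator_one_div_eq_one {m : ℕ} (hm : m ≠ 0) (h : ∀ i, y i ∈ s) :
    (∑ i ∈ Finset.range m, s.indicator (fun _ => (1 : ℝ)) (y i)) / m = 1 := by
  simp only [Set.indicator_of_mem (h _), Finset.sum_const, Finset.card_range, nsmul_eq_mul,
    mul_one]
  exact div_self (Nat.cast_ne_zero.mpr hm)

end EmpiricalFrequency

theorem rotation_orbits_ulln_fails_general (α : ℝ)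
    {Ω : Type*} [MeasurableSpace Ω] (P : Measure Ω)
    (X₀ : Ω → UnitAddCircle)
    (X : ℕ → Ω → UnitAddCircle) (hX : ∀ i ω, X i ω = X₀ ω + (i : ℤ) • (α : UnitAddCircle)) :
    ((∃ D : Finset UnitAddCircle, D.card = 1 ∧ Shatters (Set.range (rotOrbit α)) D) ∧
      (∀ D : Finset UnitAddCircle, Shatters (Set.range (rotOrbit α)) D → D.card ≤ 1)) ∧
    (∀ x : UnitAddCircle, volume (rotOrbit α x) = 0) ∧
    (∀ m : ℕ, 1 ≤ m → ∀ᵐ ω ∂P,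
      (⨆ x : UnitAddCircle, |(∑ i ∈ Finset.range m,
          Set.indicator (rotOrbit α x) (fun _ => (1 : ℝ)) (X i ω)) / m
        - (volume (rotOrbit α x)).toReal|) = 1) := by
  have hshatters_zero : Shatters (Set.range (rotOrbit α)) {0} := by
    obtain ⟨y, hy⟩ := exists_notMem_rotOrbit α 0
    refine shatters_singleton ⟨_, ⟨0, rfl⟩, mem_rotOrbit_self α 0⟩
      ⟨_, ⟨y, rfl⟩, fun h0 => hy (rotOrbit_eq_of_mem h0 ▸ mem_rotOrbit_self α y)⟩
  have horbits_partition : ∀ c ∈ Set.range (rotOrbit α), ∀ c' ∈ Set.range (rotOrbit α),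
      ∀ z ∈ c, z ∈ c' → c = c' := by
    rintro _ ⟨x, rfl⟩ _ ⟨x', rfl⟩ z hz hz'
    rw [← rotOrbit_eq_of_mem hz, ← rotOrbit_eq_of_mem hz']
  refine ⟨⟨⟨{0}, rfl, hshatters_zero⟩, fun D hD => hD.card_le_one horbits_partition⟩,
    volume_rotOrbit α, fun m hm => ae_of_all P fun ω => ?_⟩
  simp only [volume_rotOrbit, ENNReal.toReal_zero, sub_zero]
  refine ciSup_eq_of_forall_le_of_forall_lt_exists_gt
    (fun x => abs_sum_indicator_one_div_le_one _ _ m) fun w hw => ⟨X₀ ω, ?_⟩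
  have hsample : ∀ i, X i ω ∈ rotOrbit α (X₀ ω) := fun i => ⟨i, hX i ω⟩
  rwa [sum_indicator_one_div_eq_one _ _ (by omega) hsample, abs_one]

/-- For an irrational rotation `T` of the unit circle with uniform measure `μ`, the
family `C = {C_x}` of orbits has VC dimension 1, each orbit is `μ`-null, and for the
stationary ergodic process `X_i = T^i X₀` with `X₀ ∼ μ`, the uniform empirical deviation
over `C` equals 1 almost surely for every `m ≥ 1`: the uniform law of large numbers fails
for this uncountable VC class. -/
theorem rotation_orbits_ulln_fails (α : ℝ) (hα : Irrational α)
    {Ω : Type*} [MeasurableSpace Ω] (P : Measure Ω) [IsProbabilityMeasure P]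
    (X₀ : Ω → UnitAddCircle) (hX₀ : Measurable X₀)
    (hunif : Measure.map X₀ P = volume)
    (X : ℕ → Ω → UnitAddCircle) (hX : ∀ i ω, X i ω = X₀ ω + (i : ℤ) • (α : UnitAddCircle)) :
    ((∃ D : Finset UnitAddCircle, D.card = 1 ∧ Shatters (Set.range (rotOrbit α)) D) ∧
      (∀ D : Finset UnitAddCircle, Shatters (Set.range (rotOrbit α)) D → D.card ≤ 1)) ∧
    (∀ x : UnitAddCircle, volume (rotOrbit α x) = 0) ∧
    (∀ m : ℕ, 1 ≤ m → ∀ᵐ ω ∂P,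
      (⨆ x : UnitAddCircle, |(∑ i ∈ Finset.range m,
          Set.indicator (rotOrbit α x) (fun _ => (1 : ℝ)) (X i ω)) / m
        - (volume (rotOrbit α x)).toReal|) = 1) :=
  rotation_orbits_ulln_fails_general α P X₀ X hX
end

section
/- Let C₁, C₂, … be Borel subsets of [0,1] such that the maximal diameter of the cells of the join J_n = ⋁_{i=1}^n C_i tends to 0 as n → ∞. Then there exists a Borel measurable map φ : [0,1] → [0,1] and a Borel set V₁ of Lebesgue measure one such that φ preserves Lebesgue measure, φ is one-to-one on V₁ with Borel image V₂ = φ(V₁) and Borel measurable inverse φ^{-1} : V₂ → V₁ which also preserves Lebesgue measure, and for every C in the collection there is a finite union of intervals U(C) with λ(φ(C) △ U(C)) = 0. -/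
open MeasureTheory

/-- The cell of the join `J_n = ⋁_{i<n} C_i` (within `[0,1]`) corresponding to a sign
pattern `ε`. -/
def joinCell (C : ℕ → Set ℝ) (n : ℕ) (ε : Fin n → Bool) : Set ℝ :=
  Set.Icc (0 : ℝ) 1 ∩ ⋂ i : Fin n, if ε i then C i.1 else (C i.1)ᶜ

/-!
Code a point `x` by the ternary number `G x = ∑ᵢ 2·3^{-(i+1)}·[x ∈ Cᵢ]`. Since its digits are
`0` and `2`, the code is strictly monotone for the lexicographic order on membership patterns:
points with different patterns get different codes, so the shrinking join cells make `G`
injective on `[0,1]`, and `Cᵢ` is the `G`-preimage of the finitely many ternary intervals whose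
`i`-th digit is `2`. The law `ν` of `G` then has no atoms, so its distribution function `F` is
continuous and carries `ν` to Lebesgue measure on `[0,1]`: `φ = F ∘ G` preserves measure. It is
injective off the null set of points that `G` sends to a flat piece of `F`, and by Lusin–Souslin
it has Borel images and a Borel inverse there. Finally `φ(Cᵢ)` lies in the union `U` of the
intervals `[F a, F b]` over the ternary intervals `[a, b]` of `Cᵢ`, and since `F⁻¹(U)` exceeds
`⋃ [a, b]` only by `F`-preimages of endpoints, `λ(U) ≤ ν(⋃ [a, b]) = λ(Cᵢ) = λ(φ(Cᵢ))`.
-/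

open Set Filter Topology ProbabilityTheory

noncomputable def cantorCode (p : ℕ → Bool) : ℝ := Real.ofDigits fun i => cond (p i) (2 : Fin 3) 0

lemma cantorCode_mem_Icc (p : ℕ → Bool) : cantorCode p ∈ Icc (0 : ℝ) 1 :=
  ⟨Real.ofDigits_nonneg _, Real.ofDigits_le_one _⟩

lemma continuous_cantorCode : Continuous cantorCode :=
  Real.continuous_ofDigits.comp <| continuous_pi fun i =>
    (continuous_of_discreteTopology (f := fun b : Bool => cond b (2 : Fin 3) 0)).comp
      (continuous_apply i)

lemma cantorCode_eq_sum_add (p : ℕ → Bool) (n : ℕ) :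
    cantorCode p = ∑ k ∈ Finset.range n, cond (p k) 2 0 / (3 : ℝ) ^ (k + 1) +
      cantorCode (fun i => p (i + n)) / 3 ^ n := by
  rw [cantorCode, Real.ofDigits_eq_sum_add_ofDigits _ n, cantorCode, Nat.cast_ofNat,
    inv_mul_eq_div]
  congr 1
  refine Finset.sum_congr rfl fun k _ => ?_
  cases h : p k <;> simp [h, Real.ofDigitsTerm, div_eq_mul_inv]

lemma cantorCode_lt_cantorCode {p q : ℕ → Bool} {j : ℕ} (hpq : ∀ k < j, p k = q k)
    (hp : p j = false) (hq : q j = true) : cantorCode p < cantorCode q := by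
  have hsum : ∑ k ∈ Finset.range j, cond (p k) 2 0 / (3 : ℝ) ^ (k + 1) =
      ∑ k ∈ Finset.range j, cond (q k) 2 0 / (3 : ℝ) ^ (k + 1) :=
    Finset.sum_congr rfl fun k hk => by rw [hpq k (Finset.mem_range.1 hk)]
  have htail_p : cantorCode (fun i => p (i + (j + 1))) / 3 ^ (j + 1) ≤ 1 / 3 ^ (j + 1) := by
    gcongr; exact (cantorCode_mem_Icc _).2
  have htail_q : 0 ≤ cantorCode (fun i => q (i + (j + 1))) / 3 ^ (j + 1) :=
    div_nonneg (cantorCode_mem_Icc _).1 (by positivity)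
  have hgap : (1 : ℝ) / 3 ^ (j + 1) < 2 / 3 ^ (j + 1) := by gcongr; norm_num
  rw [cantorCode_eq_sum_add p (j + 1), cantorCode_eq_sum_add q (j + 1), Finset.sum_range_succ,
    Finset.sum_range_succ, hsum, hp, hq, cond_false, cond_true, zero_div]
  linarith

lemma strictMono_cantorCode : StrictMono (cantorCode ∘ ofLex) := by
  rintro p q ⟨j, hpq, hj⟩
  have : p j = false ∧ q j = true := by
    revert hj; cases p j <;> cases q j <;> simp
  exact cantorCode_lt_cantorCode hpq this.1 this.2

lemma cantorCode_le_cantorCode_iff {p q : ℕ → Bool} :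
    cantorCode p ≤ cantorCode q ↔ toLex p ≤ toLex q :=
  strictMono_cantorCode.le_iff_le

def padWord {n : ℕ} (w : Fin n → Bool) (b : Bool) : ℕ → Bool :=
  fun k => if h : k < n then w ⟨k, h⟩ else b

lemma cantorCode_mem_Icc_padWord_iff {n : ℕ} (w : Fin n → Bool) (q : ℕ → Bool) :
    cantorCode q ∈ Icc (cantorCode (padWord w false)) (cantorCode (padWord w true)) ↔
      ∀ k : Fin n, w k = q k := by
  rw [mem_Icc, cantorCode_le_cantorCode_iff, cantorCode_le_cantorCode_iff]
  constructor
  · rintro ⟨hlo, hhi⟩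
    suffices h : ∀ k (hk : k < n), w ⟨k, hk⟩ = q k from fun k => h k k.2
    intro k
    induction k using Nat.strong_induction_on with
    | _ k ih =>
      intro hk
      have hagree : ∀ b, ∀ j < k, padWord w b j = q j := fun b j hj => by
        simp [padWord, hj.trans hk, ih j hj]
      have h1 := Pi.apply_le_of_toLex hlo (hagree false)
      have h2 := Pi.apply_le_of_toLex hhi fun j hj => (hagree true j hj).symm
      simp only [padWord, hk, dite_true] at h1 h2
      exact le_antisymm h1 h2
  · intro h
    refine ⟨Pi.toLex_monotone fun k => ?_, Pi.toLex_monotone fun k => ?_⟩ <;>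
    · by_cases hk : k < n
      · simp [padWord, hk, h ⟨k, hk⟩]
      · simp [padWord, hk]

lemma exists_finset_cantorCode_preimage_eq (i : ℕ) :
    ∃ S : Finset (ℝ × ℝ), cantorCode ⁻¹' (⋃ ab ∈ S, Icc ab.1 ab.2) = {q | q i = true} := by
  classical
  -- one interval for each word of length `i + 1` ending in `true`
  refine ⟨Finset.univ.image fun w : Fin i → Bool =>
    (cantorCode (padWord (Fin.snoc w true : Fin (i + 1) → Bool) false),
      cantorCode (padWord (Fin.snoc w true : Fin (i + 1) → Bool) true)), ?_⟩
  ext q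
  simp only [Finset.set_biUnion_finset_image, Finset.mem_univ, iUnion_true, mem_preimage,
    mem_iUnion, cantorCode_mem_Icc_padWord_iff, Fin.forall_fin_succ', Fin.snoc_castSucc,
    Fin.snoc_last, mem_ofPred_eq]
  exact ⟨fun ⟨_, _, h⟩ => h.symm, fun h => ⟨fun k => q k, fun _ => rfl, h.symm⟩⟩

open Classical in
noncomputable def joinCode (C : ℕ → Set ℝ) (x : ℝ) : ℝ := cantorCode fun i => decide (x ∈ C i)

lemma measurable_joinCode {C : ℕ → Set ℝ} (hC : ∀ i, MeasurableSet (C i)) :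
    Measurable (joinCode C) := by
  refine continuous_cantorCode.measurable.comp (measurable_pi_lambda _ fun i => ?_)
  exact measurable_to_bool (by simpa [preimage] using hC i)

lemma exists_finset_joinCode_preimage_eq (C : ℕ → Set ℝ) (i : ℕ) :
    ∃ S : Finset (ℝ × ℝ), joinCode C ⁻¹' (⋃ ab ∈ S, Icc ab.1 ab.2) = C i := by
  classical
  obtain ⟨S, hS⟩ := exists_finset_cantorCode_preimage_eq i
  refine ⟨S, ext fun x => ?_⟩
  change (fun i => decide (x ∈ C i)) ∈ cantorCode ⁻¹' _ ↔ _
  simp [hS]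

lemma mem_joinCell {C : ℕ → Set ℝ} {x : ℝ} (hx : x ∈ Icc (0 : ℝ) 1) {n : ℕ} {ε : Fin n → Bool}
    (hε : ∀ i, ε i = true ↔ x ∈ C i) : x ∈ joinCell C n ε := by
  refine ⟨hx, mem_iInter.2 fun i => ?_⟩
  by_cases h : ε i <;> simp_all

lemma injOn_joinCode {C : ℕ → Set ℝ}
    (hdiam : ∀ δ : ℝ, 0 < δ → ∃ N : ℕ, ∀ n ≥ N, ∀ ε : Fin n → Bool,
      Metric.ediam (joinCell C n ε) ≤ ENNReal.ofReal δ) :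
    InjOn (joinCode C) (Icc 0 1) := by
  classical
  intro x hx y hy hxy
  have hmem : ∀ i, x ∈ C i ↔ y ∈ C i := fun i =>
    decide_eq_decide.1 (congrFun (strictMono_cantorCode.injective hxy) i)
  have hle : ∀ δ > 0, dist x y ≤ δ := fun δ hδ => by
    obtain ⟨N, hN⟩ := hdiam δ hδ
    have hxN : x ∈ joinCell C N fun i => decide (x ∈ C i) :=
      mem_joinCell hx fun _ => decide_eq_true_iff
    have hyN : y ∈ joinCell C N fun i => decide (x ∈ C i) :=
      mem_joinCell hy fun i => decide_eq_true_iff.trans (hmem i)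
    have h := (Metric.edist_le_ediam_of_mem hxN hyN).trans (hN N le_rfl _)
    rwa [edist_dist, ENNReal.ofReal_le_ofReal_iff hδ.le] at h
  exact dist_le_zero.1 (le_of_forall_pos_le_add fun δ hδ => by simpa using hle δ hδ)

lemma Monotone.preimage_Icc_subset {α β : Type*} [LinearOrder α] [PartialOrder β] {f : α → β}
    (hf : Monotone f) (a b : α) : f ⁻¹' Icc (f a) (f b) ⊆ Icc a b ∪ f ⁻¹' {f a, f b} := by
  rintro z ⟨hza, hzb⟩
  rcases lt_or_ge z a with ha | ha
  · exact Or.inr (Or.inl (le_antisymm (hf ha.le) hza))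
  rcases le_or_gt z b with hb | hb
  · exact Or.inl ⟨ha, hb⟩
  · exact Or.inr (Or.inr (le_antisymm hzb (hf hb.le)))

lemma Monotone.injOn_compl_preimage_image_rat {f : ℝ → ℝ} (hf : Monotone f) :
    InjOn f (f ⁻¹' (f '' range ((↑) : ℚ → ℝ)))ᶜ := by
  intro x hx y hy hxy
  by_contra hne
  wlog hlt : x < y generalizing x y
  · exact this hy hx hxy.symm (Ne.symm hne) (lt_of_le_of_ne (not_lt.1 hlt) (Ne.symm hne))
  obtain ⟨q, hxq, hqy⟩ := exists_rat_btwn hlt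
  exact hx ⟨q, ⟨q, rfl⟩, le_antisymm (hxy ▸ hf hqy.le) (hf hxq.le)⟩

namespace ProbabilityTheory

variable (ν : Measure ℝ) [IsProbabilityMeasure ν] [NullSingletonClass ν]

lemma continuous_cdf : Continuous (cdf ν) := by
  refine continuous_iff_continuousAt.2 fun x => ?_
  rw [(monotone_cdf ν).continuousAt_iff_leftLim_eq_rightLim, StieltjesFunction.rightLim_eq]
  have h := (cdf ν).measure_singleton x
  rw [measure_cdf, measure_singleton, eq_comm, ENNReal.ofReal_eq_zero] at h
  exact le_antisymm ((monotone_cdf ν).leftLim_le le_rfl) (by linarith)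

lemma measure_cdf_preimage_Iic {t : ℝ} (ht : t < 1) :
    ν (cdf ν ⁻¹' Iic t) = ENNReal.ofReal t := by
  rcases (cdf ν ⁻¹' Iic t).eq_empty_or_nonempty with hE | hne
  · rw [hE, measure_empty, eq_comm, ENNReal.ofReal_eq_zero]
    by_contra! ht0
    obtain ⟨z, hz⟩ := ((tendsto_cdf_atBot ν).eventually_lt_const ht0).exists
    exact hE.subset (show z ∈ cdf ν ⁻¹' Iic t from hz.le)
  have hbdd : BddAbove (cdf ν ⁻¹' Iic t) := by
    obtain ⟨M, hM⟩ := eventually_atTop.1 ((tendsto_cdf_atTop ν).eventually_const_lt ht)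
    exact ⟨M, fun z hz => not_lt.1 fun hMz => (hM z hMz.le).not_ge hz⟩
  have hclosed : IsClosed (cdf ν ⁻¹' Iic t) := isClosed_Iic.preimage (continuous_cdf ν)
  have hmem := hclosed.csSup_mem hne hbdd
  set s := sSup (cdf ν ⁻¹' Iic t)
  have hs : cdf ν ⁻¹' Iic t = Iic s :=
    Subset.antisymm (fun z hz => le_csSup hbdd hz) fun z hz => (monotone_cdf ν hz).trans hmem
  have hts : t ≤ cdf ν s := by
    refine ge_of_tendsto (x := 𝓝[>] s)
      (((continuous_cdf ν).tendsto s).mono_left nhdsWithin_le_nhds)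
      (eventually_nhdsWithin_of_forall fun z (hz : z ∈ Ioi s) => ?_)
    by_contra! h
    have hz' : z ∈ cdf ν ⁻¹' Iic t := h.le
    rw [hs] at hz'
    exact not_le.2 (mem_Ioi.1 hz) (mem_Iic.1 hz')
  rw [hs, ← ofReal_cdf, le_antisymm hmem hts]

lemma measurePreserving_cdf : MeasurePreserving (cdf ν) ν (volume.restrict (Icc 0 1)) := by
  refine ⟨(monotone_cdf ν).measurable, ?_⟩
  have := Measure.isProbabilityMeasure_map (μ := ν) (monotone_cdf ν).measurable.aemeasurable
  refine Measure.ext_of_Iic _ _ fun t => ?_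
  rw [Measure.map_apply (monotone_cdf ν).measurable measurableSet_Iic,
    Measure.restrict_apply measurableSet_Iic]
  rcases lt_or_ge t 1 with ht | ht
  · have hIic : Iic t ∩ Icc 0 1 = Icc 0 t := by
      ext z
      simp only [mem_inter_iff, mem_Iic, mem_Icc]
      exact ⟨fun h => ⟨h.2.1, h.1⟩, fun h => ⟨h.2, h.1, h.2.trans ht.le⟩⟩
    rw [measure_cdf_preimage_Iic ν ht, hIic, Real.volume_Icc, sub_zero]
  · rw [show cdf ν ⁻¹' Iic t = univ from eq_univ_of_forall fun z => (cdf_le_one ν z).trans ht,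
      measure_univ, inter_eq_right.2 fun z hz => hz.2.trans ht, Real.volume_Icc, sub_zero,
      ENNReal.ofReal_one]

lemma measure_cdf_preimage_of_countable {T : Set ℝ} (hT : T.Countable) : ν (cdf ν ⁻¹' T) = 0 := by
  rw [(measurePreserving_cdf ν).measure_preimage hT.measurableSet.nullMeasurableSet,
    hT.measure_zero]

lemma measure_cdf_preimage_biUnion_Icc_le (S : Finset (ℝ × ℝ)) :
    ν (cdf ν ⁻¹' ⋃ ab ∈ S, Icc (cdf ν ab.1) (cdf ν ab.2)) ≤ ν (⋃ ab ∈ S, Icc ab.1 ab.2) := by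
  set T := ⋃ ab ∈ S, ({cdf ν ab.1, cdf ν ab.2} : Set ℝ)
  have hT : T.Countable := S.countable_toSet.biUnion fun _ _ => (toFinite _).countable
  have hsub : cdf ν ⁻¹' ⋃ ab ∈ S, Icc (cdf ν ab.1) (cdf ν ab.2) ⊆
      (⋃ ab ∈ S, Icc ab.1 ab.2) ∪ cdf ν ⁻¹' T := by
    intro z hz
    obtain ⟨ab, hab, hzab⟩ := mem_iUnion₂.1 (mem_preimage.1 hz)
    rcases (monotone_cdf ν).preimage_Icc_subset ab.1 ab.2 hzab with h | h
    · exact Or.inl (mem_iUnion₂.2 ⟨ab, hab, h⟩)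
    · exact Or.inr (mem_preimage.2 (mem_iUnion₂.2 ⟨ab, hab, h⟩))
  calc _ ≤ _ := measure_mono hsub
    _ ≤ _ := measure_union_le _ _
    _ = _ := by rw [measure_cdf_preimage_of_countable ν hT, add_zero]

end ProbabilityTheory

section MeasurePreserving

variable {α β : Type*} [MeasurableSpace α] [StandardBorelSpace α] [MeasurableSpace β]
  [MeasurableSpace.CountablySeparated β] {μ : Measure α} {μ' : Measure β} {φ : α → β} {V : Set α}

lemma MeasureTheory.MeasurePreserving.measure_image_inter_of_injOn
    (hφ : MeasurePreserving φ μ μ') (hV : MeasurableSet V) (hVc : μ Vᶜ = 0) (hinj : InjOn φ V)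
    {A : Set α} (hA : MeasurableSet A) : μ' (φ '' (V ∩ A)) = μ A := by
  have hB := (hV.inter hA).image_of_measurable_injOn hφ.measurable (hinj.mono inter_subset_left)
  rw [← hφ.measure_preimage hB.nullMeasurableSet, ← measure_inter_conull hVc,
    hinj.preimage_image_inter inter_subset_left, inter_comm, measure_inter_conull hVc]

lemma MeasureTheory.MeasurePreserving.exists_measurePreserving_leftInvOn [IsFiniteMeasure μ]
    [Nonempty α] (hφ : MeasurePreserving φ μ μ') (hV : MeasurableSet V) (hVc : μ Vᶜ = 0)
    (hinj : InjOn φ V) : ∃ ψ : β → α, MeasurePreserving ψ μ' μ ∧ LeftInvOn ψ φ V := by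
  have := hV.standardBorel
  have hemb : MeasurableEmbedding (V.domRestrict φ) :=
    (hφ.measurable.comp measurable_subtype_coe).measurableEmbedding (injOn_iff_injective.1 hinj)
  obtain ⟨ψ, hψ, hψφ⟩ := hemb.exists_measurable_extend measurable_subtype_coe fun _ => ‹_›
  have hleft : LeftInvOn ψ φ V := fun x hx => congrFun hψφ ⟨x, hx⟩
  have : IsFiniteMeasure μ' := hφ.map_eq ▸ inferInstance
  have himage : μ' (φ '' V)ᶜ = 0 := by
    have hmeas := hV.image_of_measurable_injOn hφ.measurable hinj
    rw [measure_compl hmeas (measure_ne_top _ _), ← inter_univ V,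
      hφ.measure_image_inter_of_injOn hV hVc hinj MeasurableSet.univ, ← hφ.map_eq,
      Measure.map_apply hφ.measurable MeasurableSet.univ, preimage_univ, tsub_self]
  refine ⟨ψ, ⟨hψ, Measure.ext fun A hA => ?_⟩, hleft⟩
  rw [Measure.map_apply hψ hA, ← measure_inter_conull himage, ← hleft.image_inter', inter_comm,
    hφ.measure_image_inter_of_injOn hV hVc hinj hA]

end MeasurePreserving

section CdfComp

variable {α : Type*} [MeasurableSpace α] {μ : Measure α} {ν : Measure ℝ} [IsProbabilityMeasure ν]
  [NullSingletonClass ν] {G : α → ℝ}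

lemma nullSingletonClass_map_of_injOn [NullSingletonClass μ] (hG : Measurable G) {s : Set α}
    (hsc : μ sᶜ = 0) (hinj : InjOn G s) : NullSingletonClass (μ.map G) := by
  refine ⟨fun z => ?_⟩
  rw [Measure.map_apply hG (measurableSet_singleton z), ← measure_inter_conull hsc]
  exact Subsingleton.measure_zero (fun a ha b hb => hinj ha.2 hb.2 (ha.1.trans hb.1.symm)) μ

lemma exists_conull_injOn_cdf_comp (hG : MeasurePreserving G μ ν) {s : Set α}
    (hs : MeasurableSet s) (hsc : μ sᶜ = 0) (hinj : InjOn G s) :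
    ∃ V ⊆ s, MeasurableSet V ∧ μ Vᶜ = 0 ∧ InjOn (cdf ν ∘ G) V := by
  -- every flat piece of the monotone `cdf ν` contains a rational
  set T := cdf ν '' range ((↑) : ℚ → ℝ)
  have hT : T.Countable := (countable_range _).image _
  have hN : MeasurableSet (cdf ν ⁻¹' T) := (monotone_cdf ν).measurable hT.measurableSet
  refine ⟨s \ G ⁻¹' (cdf ν ⁻¹' T), sdiff_subset, hs.diff (hG.measurable hN), ?_, ?_⟩
  · rw [compl_sdiff, measure_union_null_iff, hG.measure_preimage hN.nullMeasurableSet,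
      measure_cdf_preimage_of_countable ν hT]
    exact ⟨rfl, hsc⟩
  · exact (monotone_cdf ν).injOn_compl_preimage_image_rat.comp (hinj.mono sdiff_subset)
      fun x hx => hx.2

variable [StandardBorelSpace α]

lemma image_cdf_comp_ae_eq_biUnion_Icc (hG : MeasurePreserving G μ ν) {V : Set α}
    (hV : MeasurableSet V) (hVc : μ Vᶜ = 0) (hinj : InjOn (cdf ν ∘ G) V) {C : Set α}
    (hC : MeasurableSet C) {S : Finset (ℝ × ℝ)} (hS : G ⁻¹' ⋃ ab ∈ S, Icc ab.1 ab.2 = C) :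
    (cdf ν ∘ G) '' C =ᵐ[volume] ⋃ ab ∈ S, Icc (cdf ν ab.1) (cdf ν ab.2) := by
  set U := ⋃ ab ∈ S, Icc (cdf ν ab.1) (cdf ν ab.2)
  have hφ := (measurePreserving_cdf ν).comp hG
  have hAU : (cdf ν ∘ G) '' C ⊆ U := by
    rintro _ ⟨x, hx, rfl⟩
    have hx' : x ∈ G ⁻¹' ⋃ ab ∈ S, Icc ab.1 ab.2 := hS.symm ▸ hx
    obtain ⟨ab, hab, hxab⟩ := mem_iUnion₂.1 hx'
    exact mem_iUnion₂.2 ⟨ab, hab, (monotone_cdf ν) hxab.1, (monotone_cdf ν) hxab.2⟩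
  have hBA : (cdf ν ∘ G) '' (V ∩ C) ⊆ (cdf ν ∘ G) '' C := image_mono inter_subset_right
  have hB := (hV.inter hC).image_of_measurable_injOn hφ.measurable (hinj.mono inter_subset_left)
  have hIcc : ∀ z, cdf ν z ∈ Icc (0 : ℝ) 1 := fun z => ⟨cdf_nonneg ν z, cdf_le_one ν z⟩
  have hU : U ⊆ Icc 0 1 := iUnion₂_subset fun ab _ => Icc_subset_Icc (hIcc _).1 (hIcc _).2
  have hvol : volume U ≤ volume ((cdf ν ∘ G) '' (V ∩ C)) := calc
    volume U = volume.restrict (Icc 0 1) U := (Measure.restrict_eq_self _ hU).symm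
    _ = ν (cdf ν ⁻¹' U) := ((measurePreserving_cdf ν).measure_preimage
          (S.measurableSet_biUnion fun _ _ => measurableSet_Icc).nullMeasurableSet).symm
    _ ≤ ν (⋃ ab ∈ S, Icc ab.1 ab.2) := measure_cdf_preimage_biUnion_Icc_le ν S
    _ = μ C := by rw [← hS, hG.measure_preimage
          (S.measurableSet_biUnion fun _ _ => measurableSet_Icc).nullMeasurableSet]
    _ = volume.restrict (Icc 0 1) ((cdf ν ∘ G) '' (V ∩ C)) :=
          (hφ.measure_image_inter_of_injOn hV hVc hinj hC).symm
    _ = volume ((cdf ν ∘ G) '' (V ∩ C)) :=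
          Measure.restrict_eq_self _ (image_subset_iff.2 fun x _ => hIcc _)
  have hBU := ae_eq_of_subset_of_measure_ge (hBA.trans hAU) hvol hB.nullMeasurableSet
    ((measure_mono hU).trans_lt measure_Icc_lt_top).ne
  exact hAU.eventuallyLE.antisymm (hBU.symm.le.trans hBA.eventuallyLE)

end CdfComp

theorem isomorphism_to_interval_unions_general (C : ℕ → Set ℝ)
    (hmeas : ∀ i, MeasurableSet (C i))
    (hdiam : ∀ δ : ℝ, 0 < δ → ∃ N : ℕ, ∀ n ≥ N, ∀ ε : Fin n → Bool,
      EMetric.diam (joinCell C n ε) ≤ ENNReal.ofReal δ) :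
    ∃ (φ : ℝ → ℝ) (V₁ : Set ℝ), Measurable φ ∧ MeasurableSet V₁ ∧
      V₁ ⊆ Set.Icc (0 : ℝ) 1 ∧ volume V₁ = 1 ∧
      (∀ x ∈ Set.Icc (0 : ℝ) 1, φ x ∈ Set.Icc (0 : ℝ) 1) ∧
      Measure.map φ (volume.restrict (Set.Icc (0 : ℝ) 1))
        = volume.restrict (Set.Icc (0 : ℝ) 1) ∧
      Set.InjOn φ V₁ ∧ MeasurableSet (φ '' V₁) ∧
      (∃ ψ : ℝ → ℝ, Measurable ψ ∧ (∀ x ∈ V₁, ψ (φ x) = x) ∧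
        Measure.map ψ (volume.restrict (Set.Icc (0 : ℝ) 1))
          = volume.restrict (Set.Icc (0 : ℝ) 1)) ∧
      (∀ i : ℕ, ∃ U : Set ℝ,
        (∃ S : Finset (ℝ × ℝ), U = ⋃ p ∈ S, Set.Icc p.1 p.2) ∧
        volume (symmDiff (φ '' C i) U) = 0) := by
  classical
  set μ := volume.restrict (Icc (0 : ℝ) 1)
  have : IsProbabilityMeasure μ := ⟨by simp [μ]⟩
  have hIcc : μ (Icc 0 1)ᶜ = 0 := ae_restrict_mem measurableSet_Icc
  have hG := measurable_joinCode hmeas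
  set ν := μ.map (joinCode C)
  have : IsProbabilityMeasure ν := Measure.isProbabilityMeasure_map hG.aemeasurable
  have := nullSingletonClass_map_of_injOn hG hIcc (injOn_joinCode hdiam)
  have hφ := (measurePreserving_cdf ν).comp (hG.measurePreserving μ)
  obtain ⟨V₁, hVsub, hV, hVc, hinj⟩ :=
    exists_conull_injOn_cdf_comp (hG.measurePreserving μ) measurableSet_Icc hIcc
      (injOn_joinCode hdiam)
  obtain ⟨ψ, hψ, hψφ⟩ := hφ.exists_measurePreserving_leftInvOn hV hVc hinj
  refine ⟨cdf ν ∘ joinCode C, V₁, hφ.measurable, hV, hVsub, ?_,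
    fun x _ => ⟨cdf_nonneg ν _, cdf_le_one ν _⟩, hφ.map_eq, hinj,
    hV.image_of_measurable_injOn hφ.measurable hinj, ⟨ψ, hψ.measurable, hψφ, hψ.map_eq⟩,
    fun i => ?_⟩
  · rw [← Measure.restrict_eq_self volume hVsub, ← prob_compl_eq_zero_iff hV]
    exact hVc
  · obtain ⟨S, hS⟩ := exists_finset_joinCode_preimage_eq C i
    refine ⟨_, ⟨S.image (Prod.map (cdf ν) (cdf ν)), rfl⟩, measure_symmDiff_eq_zero_iff.2 ?_⟩
    rw [Finset.set_biUnion_finset_image]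
    exact image_cdf_comp_ae_eq_biUnion_Icc (hG.measurePreserving μ) hV hVc hinj (hmeas i) hS

/-- Measure-space isomorphism onto unions of intervals: if the maximal diameter of the
cells of the joins `J_n = ⋁_{i=1}^n C_i` of Borel subsets of `[0,1]` tends to 0, then
there is a Borel map `φ : [0,1] → [0,1]` preserving Lebesgue measure, one-to-one on a
Borel set `V₁` of full measure with Borel image and measure-preserving Borel inverse,
such that each `φ(C_i)` coincides up to a Lebesgue-null set with a finite union of
intervals. -/
theorem isomorphism_to_interval_unions (C : ℕ → Set ℝ)
    (hmeas : ∀ i, MeasurableSet (C i)) (hsub : ∀ i, C i ⊆ Set.Icc (0 : ℝ) 1)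
    (hdiam : ∀ δ : ℝ, 0 < δ → ∃ N : ℕ, ∀ n ≥ N, ∀ ε : Fin n → Bool,
      EMetric.diam (joinCell C n ε) ≤ ENNReal.ofReal δ) :
    ∃ (φ : ℝ → ℝ) (V₁ : Set ℝ), Measurable φ ∧ MeasurableSet V₁ ∧
      V₁ ⊆ Set.Icc (0 : ℝ) 1 ∧ volume V₁ = 1 ∧
      (∀ x ∈ Set.Icc (0 : ℝ) 1, φ x ∈ Set.Icc (0 : ℝ) 1) ∧
      Measure.map φ (volume.restrict (Set.Icc (0 : ℝ) 1))
        = volume.restrict (Set.Icc (0 : ℝ) 1) ∧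
      Set.InjOn φ V₁ ∧ MeasurableSet (φ '' V₁) ∧
      (∃ ψ : ℝ → ℝ, Measurable ψ ∧ (∀ x ∈ V₁, ψ (φ x) = x) ∧
        Measure.map ψ (volume.restrict (Set.Icc (0 : ℝ) 1))
          = volume.restrict (Set.Icc (0 : ℝ) 1)) ∧
      (∀ i : ℕ, ∃ U : Set ℝ,
        (∃ S : Finset (ℝ × ℝ), U = ⋃ p ∈ S, Set.Icc p.1 p.2) ∧
        volume (symmDiff (φ '' C i) U) = 0) :=
  isomorphism_to_interval_unions_general C hmeas hdiam
end
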